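/- arXiv:1503.07901 — 3 statements merged into one kernel-verified Lean document; each statement's English description precedes it below -/
import Mathlib

section
/- Let p, q, x ∈ ℝ² with p ≠ q, and suppose x lies on both the circle of center p radius r₁ and the circle of center q radius r₂ (with r₁, r₂ > 0). The distance from x to the line through p and q is zero if and only if the two circles are tangent at x. -/
/-!
If `x` lies on the line and `y` is another common point of the two circles, then `p` and `q`
lie on the perpendicular bisector of `x` and `y`, hence so does the whole line and with it `x`,
forcing `y = x`. If `x` is off the line, its mirror image in the line is a second common point.
-/

open EuclideanGeometry

section

variable {V P : Type*} [NormedAddCommGroup V] [InnerProductSpace ℝ V] [MetricSpace P]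
  [NormedAddTorsor V P]

theorem eq_of_forall_dist_eq_of_mem_affineSpan {s : Set P} {x y : P} (hx : x ∈ affineSpan ℝ s)
    (hy : ∀ p ∈ s, dist y p = dist x p) : y = x := by
  have hs : affineSpan ℝ s ≤ AffineSubspace.perpBisector x y :=
    affineSpan_le.mpr fun p hp => AffineSubspace.mem_perpBisector_iff_dist_eq'.mpr (hy p hp).symm
  have hxy : dist x x = dist x y := AffineSubspace.mem_perpBisector_iff_dist_eq.mp (hs hx)
  rw [dist_self, eq_comm, dist_eq_zero] at hxy
  exact hxy.symm

theorem mem_affineSpan_iff_forall_dist_eq_imp_eq {s : Set P} (hs : s.Nonempty)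
    [(affineSpan ℝ s).direction.HasOrthogonalProjection] (x : P) :
    x ∈ affineSpan ℝ s ↔ ∀ y, (∀ p ∈ s, dist y p = dist x p) → y = x := by
  refine ⟨fun hx _ => eq_of_forall_dist_eq_of_mem_affineSpan hx, fun h => ?_⟩
  have : Nonempty (affineSpan ℝ s) := (hs.mono (subset_affineSpan ℝ s)).to_subtype
  refine (reflection_eq_self_iff x).mp (h _ fun p hp => ?_)
  rw [dist_comm, dist_reflection_eq_of_mem _ (subset_affineSpan ℝ s hp), dist_comm]

end

theorem stmt_8_general (p q x : EuclideanSpace ℝ (Fin 2)) (r₁ r₂ : ℝ)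
    (hx₁ : ‖x - p‖ = r₁) (hx₂ : ‖x - q‖ = r₂) :
    Metric.infDist x (affineSpan ℝ ({p, q} : Set (EuclideanSpace ℝ (Fin 2))) : Set (EuclideanSpace ℝ (Fin 2))) = 0 ↔
    {y : EuclideanSpace ℝ (Fin 2) | ‖y - p‖ = r₁} ∩
      {y : EuclideanSpace ℝ (Fin 2) | ‖y - q‖ = r₂} = {x} := by
  have hne : (affineSpan ℝ ({p, q} : Set (EuclideanSpace ℝ (Fin 2))) : Set _).Nonempty :=
    ⟨p, subset_affineSpan ℝ _ (Set.mem_insert p _)⟩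
  rw [← (AffineSubspace.closed_of_finiteDimensional _).mem_iff_infDist_zero hne, SetLike.mem_coe,
    mem_affineSpan_iff_forall_dist_eq_imp_eq (Set.insert_nonempty p {q}),
    Set.eq_singleton_iff_unique_mem]
  simp only [Set.mem_insert_iff, Set.mem_singleton_iff, forall_eq_or_imp, forall_eq,
    Set.mem_inter_iff, Set.mem_ofPred_eq, dist_eq_norm, hx₁, hx₂, and_imp, true_and]

theorem stmt_8 (p q x : EuclideanSpace ℝ (Fin 2)) (r₁ r₂ : ℝ)
    (hne : p ≠ q) (hr₁ : 0 < r₁) (hr₂ : 0 < r₂)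
    (hx₁ : ‖x - p‖ = r₁) (hx₂ : ‖x - q‖ = r₂) :
    Metric.infDist x (affineSpan ℝ ({p, q} : Set (EuclideanSpace ℝ (Fin 2))) : Set (EuclideanSpace ℝ (Fin 2))) = 0 ↔
    {y : EuclideanSpace ℝ (Fin 2) | ‖y - p‖ = r₁} ∩
      {y : EuclideanSpace ℝ (Fin 2) | ‖y - q‖ = r₂} = {x} :=
  stmt_8_general p q x r₁ r₂ hx₁ hx₂
end

section
/- Let p₁, p₃, p ∈ ℝ² with p not on the line L through p₁ and p₃ and p₁ ≠ p₃. Let q be the orthogonal projection of p onto L, let v = ‖p - q‖ and r = ‖p - p₁‖. Define p₃' = p + r·(q - p)/v. Let q' be the orthogonal projection of p onto the line through p₁ and p₃', and v' = ‖p - q'‖. Then v'²/r² = 1/2 + v/(2r). -/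
/-!
Both `p₁` and `p₃'` lie on the circle of radius `r` about `p`, so the foot `q'` of `p` on the
chord `p₁p₃'` is its midpoint and `v'² = r² - ‖p₃' - p₁‖² / 4`. Since `q - p ⊥ q - p₁`, the chord
satisfies `‖p₃' - p₁‖² = 2r² - 2rv`, which gives `v'² = (r² + rv) / 2`.
-/

open scoped RealInnerProductSpace

section FootOfPerpendicular

variable {V : Type*} [NormedAddCommGroup V] [InnerProductSpace ℝ V]

lemma exists_smul_eq_sub_of_mem_affineSpan_pair {a b q : V} (hq : q ∈ line[ℝ, a, b]) :
    ∃ t : ℝ, t • (b - a) = q - a :=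
  vadd_left_mem_affineSpan_pair.mp (by rwa [vsub_vadd] : (q -ᵥ a) +ᵥ a ∈ line[ℝ, a, b])

lemma inner_sub_eq_zero_of_mem_affineSpan_pair {a b q x : V} (hq : q ∈ line[ℝ, a, b])
    (hx : ⟪x, b - a⟫ = 0) : ⟪x, q - a⟫ = 0 := by
  obtain ⟨t, ht⟩ := exists_smul_eq_sub_of_mem_affineSpan_pair hq
  rw [← ht, real_inner_smul_right, hx, mul_zero]

lemma norm_sub_foot_sq_of_norm_eq {p a b q : V} (hab : ‖p - a‖ = ‖p - b‖)
    (hq : q ∈ line[ℝ, a, b]) (hperp : ⟪p - q, b - a⟫ = 0) :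
    ‖p - q‖ ^ 2 = ‖p - a‖ ^ 2 - ‖b - a‖ ^ 2 / 4 := by
  obtain ⟨s, hs⟩ := exists_smul_eq_sub_of_mem_affineSpan_pair hq
  have hpq : p - q = (p - a) - s • (b - a) := by rw [hs]; abel
  have hpb : p - b = (p - a) - (b - a) := by abel
  have hiso : 2 * ⟪p - a, b - a⟫ = ‖b - a‖ ^ 2 := by
    have := norm_sub_sq_real (p - a) (b - a)
    rw [← hpb, ← hab] at this
    linarith
  have hs' : ⟪p - a, b - a⟫ = s * ‖b - a‖ ^ 2 := by
    rw [hpq, inner_sub_left, real_inner_smul_left, real_inner_self_eq_norm_sq] at hperp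
    linarith
  rw [hpq, norm_sub_sq_real, norm_smul, real_inner_smul_right, mul_pow, Real.norm_eq_abs,
    sq_abs]
  linear_combination (1 / 2 - s) * hs' - (s / 2 + 1 / 4) * hiso

lemma norm_add_smul_sub_sq_of_inner_eq_zero {p q a : V} (h : ⟪p - q, q - a⟫ = 0) (c : ℝ) :
    ‖p + c • (q - p) - a‖ ^ 2 = ‖p - a‖ ^ 2 + (c ^ 2 - 2 * c) * ‖p - q‖ ^ 2 := by
  have hqp : ⟪q - p, p - a⟫ = -‖p - q‖ ^ 2 := by
    have hsplit : p - a = (p - q) + (q - a) := by abel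
    rw [hsplit, inner_add_right, ← neg_sub p q, inner_neg_left, real_inner_self_eq_norm_sq,
      inner_neg_left, h]
    ring
  have hrearr : p + c • (q - p) - a = (p - a) + c • (q - p) := by abel
  rw [hrearr, norm_add_sq_real, norm_smul, real_inner_smul_right, real_inner_comm, hqp,
    mul_pow, Real.norm_eq_abs, sq_abs, ← neg_sub p q, norm_neg]
  ring

end FootOfPerpendicular

theorem stmt_10_general (p₁ p₃ p q q' p₃' : EuclideanSpace ℝ (Fin 2)) (v r v' : ℝ)
    (hp : p ∉ affineSpan ℝ ({p₁, p₃} : Set (EuclideanSpace ℝ (Fin 2))))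
    (hq_mem : q ∈ affineSpan ℝ ({p₁, p₃} : Set (EuclideanSpace ℝ (Fin 2))))
    (hq_perp : ⟪p - q, p₃ - p₁⟫ = 0)
    (hv : v = ‖p - q‖) (hr : r = ‖p - p₁‖)
    (hp₃' : p₃' = p + (r / v) • (q - p))
    (hq'_mem : q' ∈ affineSpan ℝ ({p₁, p₃'} : Set (EuclideanSpace ℝ (Fin 2))))
    (hq'_perp : ⟪p - q', p₃' - p₁⟫ = 0)
    (hv' : v' = ‖p - q'‖) :
    v' ^ 2 / r ^ 2 = 1 / 2 + v / (2 * r) := by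
  have hr0 : 0 < r := by
    rw [hr, norm_pos_iff, sub_ne_zero]
    rintro rfl
    exact hp (left_mem_affineSpan_pair ℝ p p₃)
  have hv0 : 0 < v := by
    rw [hv, norm_pos_iff, sub_ne_zero]
    rintro rfl
    exact hp hq_mem
  have hfoot : ⟪p - q, q - p₁⟫ = 0 :=
    inner_sub_eq_zero_of_mem_affineSpan_pair hq_mem hq_perp
  have hcircle : ‖p - p₁‖ = ‖p - p₃'‖ := by
    rw [hp₃', sub_add_cancel_left, norm_neg, norm_smul, ← neg_sub p q, norm_neg, ← hv, ← hr,
      Real.norm_eq_abs, abs_of_pos (div_pos hr0 hv0), div_mul_cancel₀ r hv0.ne']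
  have hchord : ‖p₃' - p₁‖ ^ 2 = 2 * r ^ 2 - 2 * r * v := by
    rw [hp₃', norm_add_smul_sub_sq_of_inner_eq_zero hfoot, ← hv, ← hr]
    field_simp
    ring
  have hv'sq : v' ^ 2 = r ^ 2 - (2 * r ^ 2 - 2 * r * v) / 4 := by
    rw [hv', norm_sub_foot_sq_of_norm_eq hcircle hq'_mem hq'_perp, hchord, hr]
  rw [hv'sq]
  field_simp
  ring

theorem stmt_10 (p₁ p₃ p q q' p₃' : EuclideanSpace ℝ (Fin 2)) (v r v' : ℝ)
    (h₁₃ : p₁ ≠ p₃)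
    (hp : p ∉ affineSpan ℝ ({p₁, p₃} : Set (EuclideanSpace ℝ (Fin 2))))
    (hq_mem : q ∈ affineSpan ℝ ({p₁, p₃} : Set (EuclideanSpace ℝ (Fin 2))))
    (hq_perp : ⟪p - q, p₃ - p₁⟫ = 0)
    (hv : v = ‖p - q‖) (hr : r = ‖p - p₁‖)
    (hp₃' : p₃' = p + (r / v) • (q - p))
    (hq'_mem : q' ∈ affineSpan ℝ ({p₁, p₃'} : Set (EuclideanSpace ℝ (Fin 2))))
    (hq'_perp : ⟪p - q', p₃' - p₁⟫ = 0)
    (hv' : v' = ‖p - q'‖) :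
    v' ^ 2 / r ^ 2 = 1 / 2 + v / (2 * r) :=
  stmt_10_general p₁ p₃ p q q' p₃' v r v' hp hq_mem hq_perp hv hr hp₃' hq'_mem hq'_perp hv'
end

section
/- Let 0 < α < 1/2. Let p₁, p₃, p ∈ ℝ² with p₁ ≠ p₃, p not on the line through p₁ and p₃, and suppose γ(p, p₁, p₃) := dist(p, line(p₁,p₃))/max(‖p-p₁‖, ‖p-p₃‖) ≤ α. Let r = ‖p - p₁‖, let q be the orthogonal projection of p onto line(p₁,p₃), and set p₃' = p + r·(q - p)/‖p - q‖. Then γ(p, p₁, p₃') > α. -/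
open scoped RealInnerProductSpace

set_option maxHeartbeats 1000000 in
theorem stmt_11 (α : ℝ) (hα : 0 < α) (hα' : α < 1 / 2)
    (p₁ p₃ p q p₃' : EuclideanSpace ℝ (Fin 2)) (r : ℝ)
    (h₁₃ : p₁ ≠ p₃)
    (hp : p ∉ affineSpan ℝ ({p₁, p₃} : Set (EuclideanSpace ℝ (Fin 2))))
    (hγ : Metric.infDist p (affineSpan ℝ ({p₁, p₃} : Set (EuclideanSpace ℝ (Fin 2))) : Set (EuclideanSpace ℝ (Fin 2))) /
        max ‖p - p₁‖ ‖p - p₃‖ ≤ α)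
    (hr : r = ‖p - p₁‖)
    (hq_mem : q ∈ affineSpan ℝ ({p₁, p₃} : Set (EuclideanSpace ℝ (Fin 2))))
    (hq_perp : ⟪p - q, p₃ - p₁⟫ = 0)
    (hp₃' : p₃' = p + (r / ‖p - q‖) • (q - p)) :
    α < Metric.infDist p (affineSpan ℝ ({p₁, p₃'} : Set (EuclideanSpace ℝ (Fin 2))) : Set (EuclideanSpace ℝ (Fin 2))) /
        max ‖p - p₁‖ ‖p - p₃'‖ := by
  set d : ℝ := ‖p - q‖ with hdd
  have hpq : p ≠ q := by
    rintro rfl; exact hp hq_mem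
  have hd0 : (0:ℝ) < d := by
    rw [hdd, norm_pos_iff, sub_ne_zero]; exact hpq
  have hp1mem : p₁ ∈ affineSpan ℝ ({p₁, p₃} : Set (EuclideanSpace ℝ (Fin 2))) :=
    left_mem_affineSpan_pair ℝ p₁ p₃
  have hr0 : (0:ℝ) < r := by
    rw [hr, norm_pos_iff, sub_ne_zero]
    rintro rfl; exact hp hp1mem
  -- p - p₃' and its norm
  have hpp₃ : p - p₃' = (r / d) • (p - q) := by
    rw [hp₃']
    rw [smul_sub, smul_sub]
    abel
  have hnp₃ : ‖p - p₃'‖ = r := by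
    rw [hpp₃, norm_smul, Real.norm_eq_abs, abs_of_pos (div_pos hr0 hd0), ← hdd]
    field_simp
  have hmax : max ‖p - p₁‖ ‖p - p₃'‖ = r := by
    rw [hnp₃, ← hr, max_self]
  -- q - p₁ is a multiple of p₃ - p₁
  have hq' : q -ᵥ p₁ ∈ vectorSpan ℝ ({p₁, p₃} : Set (EuclideanSpace ℝ (Fin 2))) := by
    rw [← direction_affineSpan]
    exact AffineSubspace.vsub_mem_direction hq_mem hp1mem
  obtain ⟨s, hs⟩ := mem_vectorSpan_pair_rev.mp hq'
  -- key inner product computations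
  have inner1 : ⟪p - p₁, p - q⟫ = d ^ 2 := by
    have hdecomp : p - p₁ = (p - q) + s • (p₃ - p₁) := by
      have : q - p₁ = s • (p₃ - p₁) := hs.symm
      rw [← this]; abel
    have hperp' : ⟪p₃ - p₁, p - q⟫ = 0 := by
      rw [real_inner_comm]; exact hq_perp
    rw [hdecomp, inner_add_left, real_inner_smul_left, hperp',
      real_inner_self_eq_norm_sq, ← hdd]
    ring
  have inner2 : ⟪p - p₁, p - p₃'⟫ = r * d := by
    rw [hpp₃, real_inner_smul_right, inner1]
    field_simp
  set m : EuclideanSpace ℝ (Fin 2) := midpoint ℝ p₁ p₃' with hm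
  have hpm : p - m = (1/2 : ℝ) • ((p - p₁) + (p - p₃')) := by
    rw [hm, midpoint_eq_smul_add, invOf_eq_inv]
    module
  have hpm2 : ‖p - m‖ ^ 2 = (r ^ 2 + r * d) / 2 := by
    rw [hpm, norm_smul, mul_pow, @norm_add_sq_real, ← hr, hnp₃, inner2]
    norm_num
    ring
  have horth : ⟪p - m, p₃' - p₁⟫ = 0 := by
    have h1 : p₃' - p₁ = (p - p₁) - (p - p₃') := by abel
    rw [hpm, h1, real_inner_smul_left, inner_sub_right, inner_add_left, inner_add_left,
      real_inner_self_eq_norm_sq, real_inner_self_eq_norm_sq, ← hr, hnp₃,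
      real_inner_comm (p - p₃')]
    ring
  -- lower bound on distances to points of the new line
  have hle : ∀ y ∈ (affineSpan ℝ ({p₁, p₃'} : Set (EuclideanSpace ℝ (Fin 2))) :
      Set (EuclideanSpace ℝ (Fin 2))), ‖p - m‖ ≤ dist p y := by
    intro y hy
    have hy' : y -ᵥ p₁ ∈ vectorSpan ℝ ({p₁, p₃'} : Set (EuclideanSpace ℝ (Fin 2))) := by
      rw [← direction_affineSpan]
      exact AffineSubspace.vsub_mem_direction hy (left_mem_affineSpan_pair ℝ p₁ p₃')
    obtain ⟨t, ht⟩ := mem_vectorSpan_pair_rev.mp hy'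
    have hdecomp : p - y = (p - m) + (1/2 - t) • (p₃' - p₁) := by
      have hyq : y = t • (p₃' - p₁) + p₁ := by
        have : y - p₁ = t • (p₃' - p₁) := ht.symm
        rw [← this]; abel
      rw [hyq, hpm]
      module
    have hin : ⟪p - m, (1/2 - t) • (p₃' - p₁)⟫ = 0 := by
      rw [real_inner_smul_right, horth, mul_zero]
    have hsq : ‖p - y‖ ^ 2 = ‖p - m‖ ^ 2 + ‖(1/2 - t) • (p₃' - p₁)‖ ^ 2 := by
      rw [hdecomp, @norm_add_sq_real, hin]; ring
    have h1 : ‖p - m‖ ^ 2 ≤ ‖p - y‖ ^ 2 := by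
      rw [hsq]
      nlinarith [sq_nonneg ‖(1/2 - t) • (p₃' - p₁)‖]
    have := norm_nonneg (p - y)
    have := norm_nonneg (p - m)
    have : ‖p - m‖ ≤ ‖p - y‖ := by nlinarith
    rw [dist_eq_norm]
    exact this
  have hne : (affineSpan ℝ ({p₁, p₃'} : Set (EuclideanSpace ℝ (Fin 2))) :
      Set (EuclideanSpace ℝ (Fin 2))).Nonempty :=
    ⟨p₁, left_mem_affineSpan_pair ℝ p₁ p₃'⟩
  have hinf : ‖p - m‖ ≤ Metric.infDist p
      (affineSpan ℝ ({p₁, p₃'} : Set (EuclideanSpace ℝ (Fin 2))) :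
        Set (EuclideanSpace ℝ (Fin 2))) := by
    by_contra h
    push_neg at h
    obtain ⟨y, hy, hlt⟩ := (Metric.infDist_lt_iff hne).mp h
    exact absurd hlt (not_lt.mpr (hle y hy))
  have hkey : α * r < ‖p - m‖ := by
    have h14 : α ^ 2 < 1 / 4 := by nlinarith
    have h1 : (α * r) ^ 2 < ‖p - m‖ ^ 2 := by
      rw [hpm2]
      nlinarith [mul_pos hr0 hd0, mul_pos (by linarith : (0:ℝ) < 1/4 - α^2) (mul_pos hr0 hr0)]
    nlinarith [norm_nonneg (p - m), mul_pos hα hr0]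
  rw [hmax, lt_div_iff₀ hr0]
  exact lt_of_lt_of_le hkey hinf
end
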